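/- The line V = K·(τ_{ω₀} ⊗ v) is an R_n-submodule of L̄ on which every x_k and every τ_k acts by 0, and every nonzero R_n-submodule of L̄ contains V; hence V is the unique irreducible R_n-submodule of L̄. -/

import Mathlib

namespace QH1

/-- Generators of the algebra `Rₙ` attached to a single imaginary index:
dots `x k` and crossings `t k`. -/
inductive Gen (n : ℕ) : Type
  | x (k : Fin n)
  | t (k : Fin (n - 1))

/-- Position `k` viewed in `Fin n`. -/
def pc {n : ℕ} (k : Fin (n - 1)) : Fin n := ⟨k.1, by have := k.2; omega⟩

/-- Position `k+1` viewed in `Fin n`. -/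
def ps {n : ℕ} (k : Fin (n - 1)) : Fin n := ⟨k.1 + 1, by have := k.2; omega⟩

variable (K : Type) [Field K]

/-- The free algebra on the generators. -/
abbrev F (n : ℕ) : Type := FreeAlgebra K (Gen n)

def gx {n : ℕ} (k : Fin n) : F K n := FreeAlgebra.ι K (Gen.x k)
def gt {n : ℕ} (k : Fin (n - 1)) : F K n := FreeAlgebra.ι K (Gen.t k)

/-- The defining relations of `Rₙ` (single imaginary index in `I⁻`). -/
inductive Rel (n : ℕ) : F K n → F K n → Prop
  | xx (k t : Fin n) : Rel n (gx K k * gx K t) (gx K t * gx K k)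
  | tsq (k : Fin (n - 1)) : Rel n (gt K k * gt K k) 0
  | braid (k k' : Fin (n - 1)) (h : k'.1 = k.1 + 1) :
      Rel n (gt K k * gt K k' * gt K k) (gt K k' * gt K k * gt K k')
  | ttfar (k t : Fin (n - 1)) (h : k.1 + 1 < t.1 ∨ t.1 + 1 < k.1) :
      Rel n (gt K k * gt K t) (gt K t * gt K k)
  | xt (k : Fin (n - 1)) : Rel n (gx K (pc k) * gt K k) (gt K k * gx K (ps k))
  | tx (k : Fin (n - 1)) : Rel n (gt K k * gx K (pc k)) (gx K (ps k) * gt K k)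
  | txfar (k : Fin (n - 1)) (t : Fin n) (h1 : t ≠ pc k) (h2 : t ≠ ps k) :
      Rel n (gt K k * gx K t) (gx K t * gt K k)

/-- The algebra `Rₙ = R(n·i)` for a single imaginary index `i ∈ I⁻`. -/
abbrev Rn (n : ℕ) : Type := RingQuot (Rel K n)

/-- The dot generators of `Rₙ`. -/
def X {n : ℕ} (k : Fin n) : Rn K n := RingQuot.mkAlgHom K (Rel K n) (gx K k)

/-- The crossing generators of `Rₙ`. -/
def T {n : ℕ} (k : Fin (n - 1)) : Rn K n := RingQuot.mkAlgHom K (Rel K n) (gt K k)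

/-- The simple transposition `s_k` of `{1, …, n}`. -/
def sPerm {n : ℕ} (k : Fin (n - 1)) : Equiv.Perm (Fin n) := Equiv.swap (pc k) (ps k)

/-- `l` is a reduced word for the permutation `ω`. -/
def IsRedWord {n : ℕ} (ω : Equiv.Perm (Fin n)) (l : List (Fin (n - 1))) : Prop :=
  (l.map sPerm).prod = ω ∧ ∀ l' : List (Fin (n - 1)), (l'.map sPerm).prod = ω → l.length ≤ l'.length

/-- `τ_ω`: the product of crossings along a word. -/
def tprod {n : ℕ} (l : List (Fin (n - 1))) : Rn K n := (l.map (T K)).prod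

end QH1

namespace QH1

variable (K : Type) [Field K]

/-- The left ideal of `Rₙ` generated by `x₁, …, xₙ`; the induced module
`L̄ = Rₙ ⊗_{Pₙ} L` is canonically `Rₙ / Rₙ(x₁,…,xₙ)`. -/
def XIdeal (n : ℕ) : Submodule (Rn K n) (Rn K n) :=
  Submodule.span (Rn K n) (Set.range (X K (n := n)))

/-- The induced module `L̄ = Rₙ ⊗_{Pₙ} L ≅ Rₙ / Rₙ(x₁,…,xₙ)`; the class of `τ_ω`
corresponds to the basis vector `τ_ω ⊗ v`. -/
abbrev Lbar (n : ℕ) : Type := Rn K n ⧸ XIdeal K n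

end QH1
namespace QH1

open Equiv Finset

variable {n : ℕ}

@[simp] lemma pc_val (k : Fin (n-1)) : (pc k).1 = k.1 := rfl
@[simp] lemma ps_val (k : Fin (n-1)) : (ps k).1 = k.1 + 1 := rfl

lemma kbound (k : Fin (n-1)) : k.1 + 1 < n := by have := k.2; omega

lemma pc_ne_ps (k : Fin (n-1)) : pc k ≠ ps k := by
  simp [Fin.ext_iff]

lemma pc_lt_ps (k : Fin (n-1)) : pc k < ps k := by simp [Fin.lt_def]

lemma sPerm_val (k : Fin (n-1)) (x : Fin n) :
    (sPerm k x).1 = if x.1 = k.1 then k.1 + 1 else if x.1 = k.1 + 1 then k.1 else x.1 := by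
  simp only [sPerm, Equiv.swap_apply_def]
  split_ifs <;> simp_all [Fin.ext_iff] <;> omega

lemma sPerm_mul_self (k : Fin (n-1)) : sPerm k * sPerm k = 1 :=
  Equiv.swap_mul_self _ _

lemma sPerm_sPerm (k : Fin (n-1)) (x : Fin n) : sPerm k (sPerm k x) = x :=
  Equiv.swap_apply_self _ _ _

/-- The pair `{k, k+1}`. -/
def pk (k : Fin (n-1)) : Sym2 (Fin n) := s(pc k, ps k)

lemma sPerm_lt_iff {k : Fin (n-1)} {a b : Fin n} (h : s(a,b) ≠ pk k) :
    a < b ↔ sPerm k a < sPerm k b := by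
  have h' : ¬((a.1 = k.1 ∧ b.1 = k.1+1) ∨ (a.1 = k.1+1 ∧ b.1 = k.1)) := by
    simpa [pk, Sym2.eq_iff, Fin.ext_iff] using h
  have ha := a.2; have hb := b.2; have hk := kbound k
  simp only [Fin.lt_def, sPerm_val]
  split_ifs <;> omega

/-- `p` is an inversion pair for `w`. -/
def Inverted (w : Equiv.Perm (Fin n)) (p : Sym2 (Fin n)) : Prop :=
  ∃ a b, p = s(a, b) ∧ a < b ∧ w⁻¹ b < w⁻¹ a

lemma inverted_mk {w : Equiv.Perm (Fin n)} {a b : Fin n} (hab : a < b) :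
    Inverted w s(a,b) ↔ w⁻¹ b < w⁻¹ a := by
  constructor
  · rintro ⟨x, y, hxy, h1, h2⟩
    rcases Sym2.eq_iff.mp hxy with ⟨rfl, rfl⟩ | ⟨rfl, rfl⟩
    · exact h2
    · exact absurd h1 (asymm hab)
  · exact fun h => ⟨a, b, rfl, hab, h⟩

lemma inverted_mk_iff {w : Equiv.Perm (Fin n)} {a b : Fin n} :
    Inverted w s(a,b) ↔ ((a < b ∧ w⁻¹ b < w⁻¹ a) ∨ (b < a ∧ w⁻¹ a < w⁻¹ b)) := by
  constructor
  · rintro ⟨x, y, hxy, h1, h2⟩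
    rcases Sym2.eq_iff.mp hxy with ⟨rfl, rfl⟩ | ⟨rfl, rfl⟩
    · exact Or.inl ⟨h1, h2⟩
    · exact Or.inr ⟨h1, h2⟩
  · rintro (⟨h1, h2⟩ | ⟨h1, h2⟩)
    · exact ⟨a, b, rfl, h1, h2⟩
    · exact ⟨b, a, Sym2.eq_swap, h1, h2⟩

lemma inverted_not_diag {w : Equiv.Perm (Fin n)} {p : Sym2 (Fin n)}
    (h : Inverted w p) : ¬ p.IsDiag := by
  obtain ⟨a, b, rfl, h1, h2⟩ := h
  simp [Sym2.mk_isDiag_iff]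
  exact h1.ne

noncomputable def invPairs (w : Equiv.Perm (Fin n)) : Finset (Sym2 (Fin n)) :=
  @Finset.filter _ (Inverted w) (Classical.decPred _) Finset.univ

lemma mem_invPairs {w : Equiv.Perm (Fin n)} {p : Sym2 (Fin n)} :
    p ∈ invPairs w ↔ Inverted w p := by
  simp [invPairs]

lemma invPairs_one : invPairs (1 : Equiv.Perm (Fin n)) = ∅ := by
  ext p
  simp only [mem_invPairs, Finset.notMem_empty, iff_false]
  rintro ⟨a, b, rfl, h1, h2⟩
  simp at h2
  exact absurd h1 (asymm h2)

lemma smap_smap (k : Fin (n-1)) (p : Sym2 (Fin n)) :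
    Sym2.map (sPerm k) (Sym2.map (sPerm k) p) = p := by
  induction p using Sym2.ind with
  | _ a b => simp [Sym2.map_pair_eq, sPerm_sPerm]

lemma smap_inj (k : Fin (n-1)) : Function.Injective (Sym2.map (sPerm k)) :=
  Function.Involutive.injective (smap_smap k)

lemma mem_image_smap {k : Fin (n-1)} {S : Finset (Sym2 (Fin n))} {p : Sym2 (Fin n)} :
    p ∈ S.image (Sym2.map (sPerm k)) ↔ Sym2.map (sPerm k) p ∈ S := by
  constructor
  · rintro h
    rw [Finset.mem_image] at h
    obtain ⟨q, hq, rfl⟩ := h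
    rwa [smap_smap]
  · intro h
    exact Finset.mem_image.mpr ⟨_, h, smap_smap k p⟩

lemma smap_pk (k : Fin (n-1)) : Sym2.map (sPerm k) (pk k) = pk k := by
  rw [pk, Sym2.map_pair_eq, sPerm, Equiv.swap_apply_left, Equiv.swap_apply_right]
  exact Sym2.eq_swap

lemma smul_inv_apply (k : Fin (n-1)) (w : Equiv.Perm (Fin n)) (x : Fin n) :
    (sPerm k * w)⁻¹ x = w⁻¹ (sPerm k x) := by
  simp [mul_inv_rev, sPerm, Equiv.swap_inv, Equiv.Perm.mul_apply]

lemma inverted_smul_pk (k : Fin (n-1)) (w : Equiv.Perm (Fin n)) :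
    Inverted (sPerm k * w) (pk k) ↔ ¬ Inverted w (pk k) := by
  rw [pk, inverted_mk (pc_lt_ps k), inverted_mk (pc_lt_ps k), smul_inv_apply,
    smul_inv_apply, sPerm, Equiv.swap_apply_left, Equiv.swap_apply_right]
  have hne : w⁻¹ (pc k) ≠ w⁻¹ (ps k) := (Equiv.injective _).ne (pc_ne_ps k)
  rcases hne.lt_or_gt with h | h
  · simp [-Equiv.Perm.coe_inv, h, asymm h]
  · simp [-Equiv.Perm.coe_inv, h, asymm h]

lemma inverted_smul_ne {k : Fin (n-1)} {w : Equiv.Perm (Fin n)} {p : Sym2 (Fin n)}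
    (hp : p ≠ pk k) :
    Inverted (sPerm k * w) p ↔ Inverted w (Sym2.map (sPerm k) p) := by
  induction p using Sym2.ind with
  | _ a b =>
    rw [Sym2.map_pair_eq, inverted_mk_iff, inverted_mk_iff, smul_inv_apply, smul_inv_apply]
    have hlt := sPerm_lt_iff (k := k) (a := a) (b := b) hp
    have hlt' := sPerm_lt_iff (k := k) (a := b) (b := a) (by rwa [Sym2.eq_swap])
    tauto

lemma invPairs_smul (k : Fin (n-1)) (w : Equiv.Perm (Fin n)) :
    invPairs (sPerm k * w) =
      if pk k ∈ invPairs w then ((invPairs w).image (Sym2.map (sPerm k))).erase (pk k)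
      else insert (pk k) ((invPairs w).image (Sym2.map (sPerm k))) := by
  ext p
  by_cases hp : p = pk k
  · subst hp
    rw [mem_invPairs, inverted_smul_pk]
    split_ifs with h
    · simp [mem_invPairs.mp h]
    · simp [fun hc => h (mem_invPairs.mpr hc)]
      exact fun hc => h (mem_invPairs.mpr hc)
  · rw [mem_invPairs, inverted_smul_ne hp]
    split_ifs with h
    · rw [Finset.mem_erase, mem_image_smap, mem_invPairs]
      tauto
    · rw [Finset.mem_insert, mem_image_smap, mem_invPairs]
      tauto

noncomputable def nInv (w : Equiv.Perm (Fin n)) : ℕ := (invPairs w).card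

lemma card_image_smap (k : Fin (n-1)) (S : Finset (Sym2 (Fin n))) :
    (S.image (Sym2.map (sPerm k))).card = S.card :=
  Finset.card_image_of_injective _ (smap_inj k)

lemma nInv_smul_mem {k : Fin (n-1)} {w : Equiv.Perm (Fin n)} (h : pk k ∈ invPairs w) :
    nInv (sPerm k * w) + 1 = nInv w := by
  have hmem : pk k ∈ (invPairs w).image (Sym2.map (sPerm k)) := by
    rw [mem_image_smap, smap_pk]; exact h
  rw [nInv, invPairs_smul, if_pos h, Finset.card_erase_of_mem hmem, card_image_smap]
  have : 0 < (invPairs w).card := Finset.card_pos.mpr ⟨_, h⟩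
  rw [nInv]
  omega

lemma nInv_smul_not_mem {k : Fin (n-1)} {w : Equiv.Perm (Fin n)} (h : pk k ∉ invPairs w) :
    nInv (sPerm k * w) = nInv w + 1 := by
  have hmem : pk k ∉ (invPairs w).image (Sym2.map (sPerm k)) := by
    rw [mem_image_smap, smap_pk]; exact h
  rw [nInv, invPairs_smul, if_neg h, Finset.card_insert_of_notMem hmem, card_image_smap, nInv]

/-- product of a word -/
def wprod (u : List (Fin (n-1))) : Equiv.Perm (Fin n) := (u.map sPerm).prod

@[simp] lemma wprod_nil : wprod ([] : List (Fin (n-1))) = 1 := rfl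

@[simp] lemma wprod_cons (k : Fin (n-1)) (u : List (Fin (n-1))) :
    wprod (k :: u) = sPerm k * wprod u := by
  simp [wprod]

def pairs : List (Fin (n-1)) → List (Sym2 (Fin n))
  | [] => []
  | k :: u => pk k :: (pairs u).map (Sym2.map (sPerm k))

@[simp] lemma pairs_length (u : List (Fin (n-1))) : (pairs u).length = u.length := by
  induction u with
  | nil => rfl
  | cons k u ih => simp [pairs, ih]

def Red (u : List (Fin (n-1))) : Prop := u.length = nInv (wprod u)

lemma red_nil : Red ([] : List (Fin (n-1))) := by
  simp [Red, nInv, invPairs_one]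

lemma nInv_le (u : List (Fin (n-1))) : nInv (wprod u) ≤ u.length := by
  induction u with
  | nil => simp [nInv, invPairs_one]
  | cons k u ih =>
    rw [wprod_cons]
    by_cases h : pk k ∈ invPairs (wprod u)
    · have := nInv_smul_mem h; simp; omega
    · have := nInv_smul_not_mem h; simp; omega

lemma red_cons_iff {k : Fin (n-1)} {u : List (Fin (n-1))} :
    Red (k :: u) ↔ Red u ∧ pk k ∉ invPairs (wprod u) := by
  unfold Red
  rw [wprod_cons, List.length_cons]
  constructor
  · intro h
    by_cases hm : pk k ∈ invPairs (wprod u)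
    · exfalso
      have h1 := nInv_smul_mem hm
      have h2 := nInv_le u
      omega
    · have := nInv_smul_not_mem hm
      exact ⟨by omega, hm⟩
  · rintro ⟨h1, h2⟩
    rw [nInv_smul_not_mem h2]
    omega

lemma red_cons_mem {k : Fin (n-1)} {u : List (Fin (n-1))} (h : Red (k::u)) :
    pk k ∈ invPairs (wprod (k::u)) := by
  obtain ⟨h1, h2⟩ := red_cons_iff.mp h
  rw [wprod_cons, invPairs_smul, if_neg h2]
  exact Finset.mem_insert_self _ _

def pairPerm : Sym2 (Fin n) → Equiv.Perm (Fin n) :=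
  Sym2.lift ⟨fun a b => Equiv.swap a b, fun a b => Equiv.swap_comm a b⟩

@[simp] lemma pairPerm_mk (a b : Fin n) : pairPerm s(a,b) = Equiv.swap a b := rfl

lemma pairPerm_pk (k : Fin (n-1)) : pairPerm (pk k) = sPerm k := rfl

lemma pairPerm_map (g : Equiv.Perm (Fin n)) (p : Sym2 (Fin n)) :
    pairPerm (Sym2.map g p) = g * pairPerm p * g⁻¹ := by
  induction p using Sym2.ind with
  | _ a b => rw [Sym2.map_pair_eq, pairPerm_mk, pairPerm_mk, Equiv.swap_apply_apply]

lemma exc : ∀ (u : List (Fin (n-1))) (p : Sym2 (Fin n)), p ∈ pairs u →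
    ∃ u', u'.length + 1 = u.length ∧ wprod u = pairPerm p * wprod u' := by
  intro u
  induction u with
  | nil => simp [pairs]
  | cons k u ih =>
    intro p hp
    rw [pairs, List.mem_cons] at hp
    rcases hp with rfl | hp
    · exact ⟨u, by simp, by rw [wprod_cons, pairPerm_pk]⟩
    · rw [List.mem_map] at hp
      obtain ⟨q, hq, rfl⟩ := hp
      obtain ⟨u', h1, h2⟩ := ih q hq
      refine ⟨k :: u', by simp [← h1], ?_⟩
      rw [wprod_cons, h2, wprod_cons, pairPerm_map]
      simp [mul_assoc]

lemma not_nodup_delete : ∀ (u : List (Fin (n-1))), ¬ (pairs u).Nodup →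
    ∃ u', u'.length + 2 = u.length ∧ wprod u' = wprod u := by
  intro u
  induction u with
  | nil => intro h; exact absurd List.nodup_nil h
  | cons k u ih =>
    intro h
    rw [pairs, List.nodup_cons] at h
    by_cases hm : pk k ∈ (pairs u).map (Sym2.map (sPerm k))
    · have hpk : pk k ∈ pairs u := by
        rw [List.mem_map] at hm
        obtain ⟨q, hq, hq2⟩ := hm
        have : q = pk k := by
          have := congrArg (Sym2.map (sPerm k)) hq2
          rwa [smap_smap, smap_pk] at this
        rwa [this] at hq
      obtain ⟨u', h1, h2⟩ := exc u _ hpk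
      refine ⟨u', by simpa using h1, ?_⟩
      rw [wprod_cons, h2, pairPerm_pk, ← mul_assoc, sPerm_mul_self, one_mul]
    · have hnd : ¬ (pairs u).Nodup := by
        intro hn
        exact h ⟨hm, hn.map (smap_inj k)⟩
      obtain ⟨u', h1, h2⟩ := ih hnd
      exact ⟨k :: u', by simp [← h1], by rw [wprod_cons, wprod_cons, h2]⟩

lemma red_nodup {u : List (Fin (n-1))} (h : Red u) : (pairs u).Nodup := by
  by_contra hn
  obtain ⟨u', h1, h2⟩ := not_nodup_delete u hn
  have h3 := nInv_le u'
  rw [h2] at h3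
  rw [Red] at h
  omega

lemma nodup_toFinset : ∀ u : List (Fin (n-1)), (pairs u).Nodup →
    (pairs u).toFinset = invPairs (wprod u) := by
  intro u
  induction u with
  | nil => intro _; simp [pairs, invPairs_one]
  | cons k u ih =>
    intro h
    rw [pairs, List.nodup_cons] at h
    obtain ⟨hm, hnd⟩ := h
    have hnd' : (pairs u).Nodup := hnd.of_map _
    have hpk_not : pk k ∉ invPairs (wprod u) := by
      rw [← ih hnd']
      intro hc
      rw [List.mem_toFinset] at hc
      exact hm (List.mem_map.mpr ⟨pk k, hc, smap_pk k⟩)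
    rw [pairs, List.toFinset_cons, wprod_cons, invPairs_smul, if_neg hpk_not, ← ih hnd']
    congr 1
    ext p
    simp [List.mem_toFinset, List.mem_map, Finset.mem_image]

lemma red_iff_nodup {u : List (Fin (n-1))} : Red u ↔ (pairs u).Nodup := by
  refine ⟨red_nodup, fun h => ?_⟩
  rw [Red, nInv, ← nodup_toFinset u h, List.toFinset_card_of_nodup h, pairs_length]

lemma eq_one_of_no_descent {w : Equiv.Perm (Fin n)}
    (h : ∀ k : Fin (n-1), pk k ∉ invPairs w) : w = 1 := by
  have mono : ∀ k : Fin (n-1), w⁻¹ (pc k) < w⁻¹ (ps k) := by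
    intro k
    have h1 : ¬ Inverted w (pk k) := fun hc => h k (mem_invPairs.mpr hc)
    rw [pk, inverted_mk (pc_lt_ps k)] at h1
    have hne : w⁻¹ (pc k) ≠ w⁻¹ (ps k) := (Equiv.injective _).ne (pc_ne_ps k)
    rcases hne.lt_or_gt with h' | h'
    · exact h'
    · exact absurd h' h1
  have le1 : ∀ m : ℕ, ∀ i : Fin n, i.1 = m → m ≤ (w⁻¹ i).1 := by
    intro m
    induction m with
    | zero => intro i _; exact Nat.zero_le _
    | succ m ihm =>
      intro i hi
      have hm : m < n - 1 := by have := i.2; omega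
      set k : Fin (n-1) := ⟨m, hm⟩ with hk
      have hip : i = ps k := by
        apply Fin.ext; simp [hi]; rfl
      have h1 := mono k
      have h2 := ihm (pc k) rfl
      rw [← hip] at h1
      rw [Fin.lt_def] at h1
      omega
  have le2 : ∀ i : Fin n, i.1 ≤ (w⁻¹ i).1 := fun i => le1 i.1 i rfl
  have hsum : (∑ i : Fin n, (i.1 : ℕ)) = ∑ i : Fin n, ((w⁻¹ i).1 : ℕ) :=
    (Equiv.sum_comp (w⁻¹) (fun i => (i.1 : ℕ))).symm
  have heq : ∀ i : Fin n, (i.1 : ℕ) = (w⁻¹ i).1 := by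
    have := (Finset.sum_eq_sum_iff_of_le (fun i _ => le2 i)).mp hsum
    intro i; exact this i (Finset.mem_univ i)
  have : w⁻¹ = 1 := by
    apply Equiv.ext
    intro i
    have := heq i
    exact (Fin.ext this.symm)
  rwa [inv_eq_one] at this

lemma exists_reduced (w : Equiv.Perm (Fin n)) : ∃ u, Red u ∧ wprod u = w := by
  suffices H : ∀ (m : ℕ) (w : Equiv.Perm (Fin n)), nInv w = m → ∃ u, Red u ∧ wprod u = w from
    H _ w rfl
  intro m
  induction m using Nat.strong_induction_on with
  | _ m ih =>
    intro w hw
    by_cases h1 : w = 1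
    · subst h1; exact ⟨[], red_nil, rfl⟩
    · have hdesc : ∃ k, pk k ∈ invPairs w := by
        by_contra hc
        push_neg at hc
        exact h1 (eq_one_of_no_descent hc)
      obtain ⟨k, hk⟩ := hdesc
      have hlt := nInv_smul_mem hk
      obtain ⟨u, hu1, hu2⟩ := ih (nInv (sPerm k * w)) (by omega) _ rfl
      refine ⟨k :: u, ?_, ?_⟩
      · rw [Red, List.length_cons, wprod_cons, hu2, ← mul_assoc, sPerm_mul_self, one_mul]
        rw [Red, hu2] at hu1
        omega
      · rw [wprod_cons, hu2, ← mul_assoc, sPerm_mul_self, one_mul]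

noncomputable def cw (w : Equiv.Perm (Fin n)) : List (Fin (n-1)) := (exists_reduced w).choose

lemma cw_red (w : Equiv.Perm (Fin n)) : Red (cw w) := (exists_reduced w).choose_spec.1

lemma cw_prod (w : Equiv.Perm (Fin n)) : wprod (cw w) = w := (exists_reduced w).choose_spec.2

lemma cw_length (w : Equiv.Perm (Fin n)) : (cw w).length = nInv w := by
  have := cw_red w
  rwa [Red, cw_prod] at this

noncomputable def OffD : Finset (Sym2 (Fin n)) :=
  @Finset.filter _ (fun p => ¬ p.IsDiag) (Classical.decPred _) Finset.univ

lemma mem_OffD {p : Sym2 (Fin n)} : p ∈ OffD ↔ ¬ p.IsDiag := by simp [OffD]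

lemma invPairs_subset_offD (w : Equiv.Perm (Fin n)) : invPairs w ⊆ OffD := by
  intro p hp
  exact mem_OffD.mpr (inverted_not_diag (mem_invPairs.mp hp))

lemma revPerm_inv : (Fin.revPerm : Equiv.Perm (Fin n))⁻¹ = Fin.revPerm := rfl

lemma inverted_diag (w : Equiv.Perm (Fin n)) (a : Fin n) : ¬ Inverted w s(a,a) := by
  intro h
  exact inverted_not_diag h (by simp [Sym2.mk_isDiag_iff])

lemma invPairs_mul_rev (v : Equiv.Perm (Fin n)) :
    invPairs (v * Fin.revPerm) = OffD \ invPairs v := by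
  have key : ∀ x : Fin n, ((v * Fin.revPerm)⁻¹ : Equiv.Perm (Fin n)) x = Fin.rev (v⁻¹ x) := by
    intro x
    rw [mul_inv_rev, revPerm_inv, Equiv.Perm.mul_apply]
    rfl
  have aux : ∀ a b : Fin n, a < b →
      (Inverted (v * Fin.revPerm) s(a,b) ↔ ¬ a = b ∧ ¬ Inverted v s(a,b)) := by
    intro a b h
    rw [inverted_mk h, inverted_mk h, key, key, Fin.rev_lt_rev]
    have hinj : v⁻¹ a ≠ v⁻¹ b := (Equiv.injective _).ne h.ne
    constructor
    · intro h'
      exact ⟨h.ne, fun hc => absurd h' (asymm hc)⟩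
    · rintro ⟨-, h'⟩
      rcases hinj.lt_or_gt with hx | hx
      · exact hx
      · exact absurd hx h'
  ext p
  induction p using Sym2.ind with
  | _ a b =>
    rw [mem_invPairs, Finset.mem_sdiff, mem_OffD, Sym2.mk_isDiag_iff, mem_invPairs]
    rcases lt_trichotomy a b with h | h | h
    · exact aux a b h
    · subst h
      simp [inverted_diag]
    · rw [Sym2.eq_swap]
      rw [aux b a h]
      constructor
      · rintro ⟨h1, h2⟩; exact ⟨fun hc => h1 hc.symm, h2⟩
      · rintro ⟨h1, h2⟩; exact ⟨fun hc => h1 hc.symm, h2⟩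

lemma invPairs_rev : invPairs (Fin.revPerm : Equiv.Perm (Fin n)) = OffD := by
  have h := invPairs_mul_rev (1 : Equiv.Perm (Fin n))
  rw [one_mul, invPairs_one, Finset.sdiff_empty] at h
  exact h

lemma mem_image_perm {g : Equiv.Perm (Fin n)} {S : Finset (Sym2 (Fin n))} {p : Sym2 (Fin n)} :
    p ∈ S.image (Sym2.map g) ↔ Sym2.map (⇑g⁻¹) p ∈ S := by
  have hinv : ∀ q : Sym2 (Fin n), Sym2.map g (Sym2.map (⇑g⁻¹) q) = q := by
    intro q
    induction q using Sym2.ind with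
    | _ a b => simp [Sym2.map_pair_eq]
  have hinv' : ∀ q : Sym2 (Fin n), Sym2.map (⇑g⁻¹) (Sym2.map g q) = q := by
    intro q
    induction q using Sym2.ind with
    | _ a b => simp [Sym2.map_pair_eq]
  constructor
  · rintro h
    rw [Finset.mem_image] at h
    obtain ⟨q, hq, rfl⟩ := h
    rwa [hinv']
  · intro h
    exact Finset.mem_image.mpr ⟨_, h, hinv p⟩

lemma invPairs_inv (w : Equiv.Perm (Fin n)) :
    invPairs w = (invPairs w⁻¹).image (Sym2.map w) := by
  ext p
  induction p using Sym2.ind with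
  | _ a b =>
    rw [mem_invPairs, mem_image_perm]
    have : Sym2.map (⇑w⁻¹) s(a,b) = s(w⁻¹ a, w⁻¹ b) := Sym2.map_pair_eq _ _ _
    rw [this, mem_invPairs, inverted_mk_iff, inverted_mk_iff]
    simp only [inv_inv, Equiv.Perm.coe_inv, Equiv.apply_symm_apply]
    tauto

lemma smap_perm_inj (g : Equiv.Perm (Fin n)) : Function.Injective (Sym2.map g) := by
  intro p q h
  have : ∀ r : Sym2 (Fin n), Sym2.map (⇑g⁻¹) (Sym2.map g r) = r := by
    intro r
    induction r using Sym2.ind with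
    | _ a b => simp [Sym2.map_pair_eq]
  rw [← this p, ← this q, h]

lemma nInv_inv (w : Equiv.Perm (Fin n)) : nInv w⁻¹ = nInv w := by
  rw [nInv, nInv, invPairs_inv w, Finset.card_image_of_injective _ (smap_perm_inj w)]

lemma nInv_rev_mul (w : Equiv.Perm (Fin n)) :
    nInv (Fin.revPerm * w⁻¹) + nInv w = nInv (Fin.revPerm : Equiv.Perm (Fin n)) := by
  have h1 : (Fin.revPerm : Equiv.Perm (Fin n)) * w⁻¹ = (w * Fin.revPerm)⁻¹ := by
    rw [mul_inv_rev, revPerm_inv]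
  rw [h1, nInv_inv, nInv, invPairs_mul_rev, Finset.card_sdiff_of_subset (invPairs_subset_offD w)]
  have := Finset.card_le_card (invPairs_subset_offD w)
  rw [nInv, nInv, invPairs_rev]
  omega

end QH1
namespace QH1

open Equiv

variable {n : ℕ} {K : Type} [Field K]

lemma sPerm_def (k : Fin (n-1)) : sPerm k = Equiv.swap (pc k) (ps k) := rfl

lemma sPerm_inv (k : Fin (n-1)) : (sPerm k)⁻¹ = sPerm k := Equiv.swap_inv _ _

lemma sPerm_conj (k : Fin (n-1)) (x y : Fin n) :
    sPerm k * Equiv.swap x y * sPerm k = Equiv.swap (sPerm k x) (sPerm k y) := by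
  conv_rhs => rw [Equiv.swap_apply_apply]
  rw [sPerm_inv]

lemma sPerm_fix_far {k k' : Fin (n-1)} (h : k.1+1 < k'.1 ∨ k'.1+1 < k.1) :
    sPerm k (pc k') = pc k' ∧ sPerm k (ps k') = ps k' := by
  constructor <;>
    refine Equiv.swap_apply_of_ne_of_ne ?_ ?_ <;>
    (simp only [ne_eq, Fin.ext_iff, pc_val, ps_val]; omega)

lemma sPerm_comm {k k' : Fin (n-1)} (h : k.1+1 < k'.1 ∨ k'.1+1 < k.1) :
    sPerm k * sPerm k' = sPerm k' * sPerm k := by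
  obtain ⟨e1, e2⟩ := sPerm_fix_far h
  have hc : sPerm k * sPerm k' * sPerm k = sPerm k' := by
    rw [sPerm_def k', sPerm_conj, e1, e2]
  have := congrArg (· * sPerm k) hc
  simp only [mul_assoc, sPerm_mul_self, mul_one] at this
  exact this

lemma sPerm_braid {k k' : Fin (n-1)} (h : k'.1 = k.1 + 1) :
    sPerm k * sPerm k' * sPerm k = sPerm k' * sPerm k * sPerm k' := by
  have hbc : ps k = pc k' := by apply Fin.ext; simp [h]
  have ekc : sPerm k (pc k') = pc k := by rw [← hbc]; exact Equiv.swap_apply_right _ _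
  have ekc' : sPerm k (ps k') = ps k' :=
    Equiv.swap_apply_of_ne_of_ne
      (by simp only [ne_eq, Fin.ext_iff, pc_val, ps_val]; omega)
      (by simp only [ne_eq, Fin.ext_iff, pc_val, ps_val]; omega)
  have ek'a : sPerm k' (pc k) = pc k :=
    Equiv.swap_apply_of_ne_of_ne
      (by simp only [ne_eq, Fin.ext_iff, pc_val, ps_val]; omega)
      (by simp only [ne_eq, Fin.ext_iff, pc_val, ps_val]; omega)
  have ek'b : sPerm k' (ps k) = ps k' := by rw [hbc]; exact Equiv.swap_apply_left _ _
  have h1 : sPerm k * sPerm k' * sPerm k = Equiv.swap (pc k) (ps k') := by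
    rw [sPerm_def k', sPerm_conj, ekc, ekc', Equiv.swap_comm]
  have h2 : sPerm k' * sPerm k * sPerm k' = Equiv.swap (pc k) (ps k') := by
    rw [sPerm_def k, sPerm_conj, ek'a, ek'b]
  rw [h1, h2]

lemma T_mul_self (k : Fin (n-1)) : T K k * T K k = (0 : Rn K n) := by
  have h := RingQuot.mkAlgHom_rel K (s := Rel K n) (Rel.tsq k)
  rw [map_mul, map_zero] at h
  exact h

lemma T_braid {k k' : Fin (n-1)} (h : k'.1 = k.1 + 1) :
    T K k * T K k' * T K k = T K k' * T K k * T K k' := by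
  have h2 := RingQuot.mkAlgHom_rel K (s := Rel K n) (Rel.braid k k' h)
  rw [map_mul, map_mul, map_mul, map_mul] at h2
  exact h2

lemma T_far {k k' : Fin (n-1)} (h : k.1 + 1 < k'.1 ∨ k'.1 + 1 < k.1) :
    T K k * T K k' = T K k' * T K k := by
  have h2 := RingQuot.mkAlgHom_rel K (s := Rel K n) (Rel.ttfar k k' h)
  rw [map_mul, map_mul] at h2
  exact h2

lemma X_T (k : Fin (n-1)) (t : Fin n) :
    X K t * T K k = T K k * X K (sPerm k t) := by
  rcases eq_or_ne t (pc k) with rfl | h1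
  · have h2 := RingQuot.mkAlgHom_rel K (s := Rel K n) (Rel.xt k)
    rw [map_mul, map_mul] at h2
    rw [sPerm_def, Equiv.swap_apply_left]
    exact h2
  rcases eq_or_ne t (ps k) with rfl | h2
  · have h3 := RingQuot.mkAlgHom_rel K (s := Rel K n) (Rel.tx k)
    rw [map_mul, map_mul] at h3
    rw [sPerm_def, Equiv.swap_apply_right]
    exact h3.symm
  · have h3 := RingQuot.mkAlgHom_rel K (s := Rel K n) (Rel.txfar k t h1 h2)
    rw [map_mul, map_mul] at h3
    rw [sPerm_def, Equiv.swap_apply_of_ne_of_ne h1 h2]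
    exact h3.symm

@[simp] lemma tprod_nil : tprod K ([] : List (Fin (n-1))) = 1 := rfl

@[simp] lemma tprod_cons (k : Fin (n-1)) (u : List (Fin (n-1))) :
    tprod K (k :: u) = T K k * tprod K u := by
  simp [tprod]

lemma tprod_append (u v : List (Fin (n-1))) :
    tprod K (u ++ v) = tprod K u * tprod K v := by
  simp [tprod]

lemma X_tprod : ∀ (u : List (Fin (n-1))) (t : Fin n),
    X K t * tprod K u = tprod K u * X K ((wprod u)⁻¹ t) := by
  intro u
  induction u with
  | nil => intro t; simp
  | cons k u ih =>
    intro t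
    rw [tprod_cons, ← mul_assoc, X_T, mul_assoc, ih, wprod_cons, smul_inv_apply, ← mul_assoc]

theorem mats : ∀ (m : ℕ) (u u' : List (Fin (n-1))), u.length ≤ m → Red u → Red u' →
    wprod u = wprod u' → tprod K u = tprod K u' := by
  intro m
  induction m with
  | zero =>
    intro u u' hlen hu hu' hp
    have hnil : u = [] := List.eq_nil_of_length_eq_zero (Nat.le_zero.mp hlen)
    subst hnil
    have h0 : nInv (wprod u') = 0 := by
      rw [← hp, wprod_nil, nInv, invPairs_one]; rfl
    have : u' = [] := List.eq_nil_of_length_eq_zero (by rw [Red] at hu'; omega)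
    subst this; rfl
  | succ m ih =>
    intro u u' hlen hu hu' hp
    cases u with
    | nil =>
      have h0 : nInv (wprod u') = 0 := by
        rw [← hp, wprod_nil, nInv, invPairs_one]; rfl
      have : u' = [] := List.eq_nil_of_length_eq_zero (by rw [Red] at hu'; omega)
      subst this; rfl
    | cons k u₁ =>
      cases u' with
      | nil =>
        exfalso
        have h0 : nInv (wprod (k :: u₁)) = 0 := by
          rw [hp, wprod_nil, nInv, invPairs_one]; rfl
        rw [Red, h0] at hu
        simp at hu
      | cons k' u₁' =>
        -- common setup
        have hlen1 : u₁.length ≤ m := by simpa using hlen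
        obtain ⟨hru₁, -⟩ := red_cons_iff.mp hu
        obtain ⟨hru₁', -⟩ := red_cons_iff.mp hu'
        -- length of u₁'
        have hk_mem : pk k ∈ invPairs (wprod (k :: u₁)) := red_cons_mem hu
        have hk'_mem : pk k' ∈ invPairs (wprod (k :: u₁)) := by
          rw [hp]; exact red_cons_mem hu'
        set w := wprod (k :: u₁) with hw
        have hskw : sPerm k * w = wprod u₁ := by
          rw [hw, wprod_cons, ← mul_assoc, sPerm_mul_self, one_mul]
        have hsk'w : sPerm k' * w = wprod u₁' := by
          rw [hp, wprod_cons, ← mul_assoc, sPerm_mul_self, one_mul]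
        have hn1 : nInv (sPerm k * w) + 1 = nInv w := nInv_smul_mem hk_mem
        have hn1' : nInv (sPerm k' * w) + 1 = nInv w := nInv_smul_mem hk'_mem
        have lu : u₁.length = nInv (sPerm k * w) := by
          rw [Red, ← hskw] at hru₁; exact hru₁
        have lu' : u₁'.length = nInv (sPerm k' * w) := by
          rw [Red, ← hsk'w] at hru₁'; exact hru₁'
        have hlen1' : u₁'.length ≤ m := by omega
        -- case analysis
        have hcases : k.1 = k'.1 ∨ k'.1 = k.1 + 1 ∨ k.1 = k'.1 + 1 ∨
            (k.1 + 1 < k'.1 ∨ k'.1 + 1 < k.1) := by omega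
        -- the adjacent key, symmetric in roles
        have KEY : ∀ (j j' : Fin (n-1)) (v₁ v₁' : List (Fin (n-1))), j'.1 = j.1 + 1 →
            v₁.length ≤ m → Red (j::v₁) → Red (j'::v₁') → wprod (j::v₁) = wprod (j'::v₁') →
            tprod K (j::v₁) = tprod K (j'::v₁') := by
          clear hcases lu lu' hn1 hn1' hskw hsk'w hk_mem hk'_mem hru₁ hru₁' hlen1 hlen1'
            hp hu hu' hlen hw
          intro k k' u₁ u₁' hadj hlen1 hu hu' hp
          obtain ⟨hru₁, -⟩ := red_cons_iff.mp hu
          obtain ⟨hru₁', -⟩ := red_cons_iff.mp hu'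
          set w := wprod (k :: u₁) with hw
          have hk_mem : pk k ∈ invPairs w := red_cons_mem hu
          have hk'_mem : pk k' ∈ invPairs w := by rw [hp]; exact red_cons_mem hu'
          have hskw : sPerm k * w = wprod u₁ := by
            rw [hw, wprod_cons, ← mul_assoc, sPerm_mul_self, one_mul]
          have hsk'w : sPerm k' * w = wprod u₁' := by
            rw [hp, wprod_cons, ← mul_assoc, sPerm_mul_self, one_mul]
          have hbc : ps k = pc k' := by apply Fin.ext; simp [hadj]
          have ekc : sPerm k (pc k') = pc k := by rw [← hbc]; exact Equiv.swap_apply_right _ _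
          have ekc' : sPerm k (ps k') = ps k' :=
            Equiv.swap_apply_of_ne_of_ne
              (by simp only [ne_eq, Fin.ext_iff, pc_val, ps_val]; omega)
              (by simp only [ne_eq, Fin.ext_iff, pc_val, ps_val]; omega)
          have ek'a : sPerm k' (pc k) = pc k :=
            Equiv.swap_apply_of_ne_of_ne
              (by simp only [ne_eq, Fin.ext_iff, pc_val, ps_val]; omega)
              (by simp only [ne_eq, Fin.ext_iff, pc_val, ps_val]; omega)
          have ek'b : sPerm k' (ps k) = ps k' := by rw [hbc]; exact Equiv.swap_apply_left _ _
          have eka : sPerm k (pc k) = ps k := Equiv.swap_apply_left _ _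
          have m1 : Sym2.map (sPerm k) (pk k') = s(pc k, ps k') := by
            rw [pk, Sym2.map_pair_eq, ekc, ekc']
          have m2 : Sym2.map (sPerm k') (pk k) = s(pc k, ps k') := by
            rw [pk, Sym2.map_pair_eq, ek'a, ek'b]
          have m3 : Sym2.map (sPerm k) s(pc k, ps k') = pk k' := by
            rw [Sym2.map_pair_eq, eka, ekc', hbc, pk]
          have hac : s(pc k, ps k') ∈ invPairs w := by
            rw [mem_invPairs, inverted_mk (by rw [Fin.lt_def]; simp; omega)]
            have h1 := mem_invPairs.mp hk_mem
            rw [pk, inverted_mk (pc_lt_ps k)] at h1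
            have h2 := mem_invPairs.mp hk'_mem
            rw [pk, inverted_mk (pc_lt_ps k')] at h2
            rw [hbc] at h1
            exact h2.trans h1
          have ne1 : s(pc k, ps k') ≠ pk k := by
            simp only [pk, ne_eq, Sym2.eq_iff, Fin.ext_iff, pc_val, ps_val]; omega
          have ne2 : s(pc k, ps k') ≠ pk k' := by
            simp only [pk, ne_eq, Sym2.eq_iff, Fin.ext_iff, pc_val, ps_val]; omega
          have ne3 : pk k ≠ pk k' := by
            simp only [pk, ne_eq, Sym2.eq_iff, Fin.ext_iff, pc_val, ps_val]; omega
          have hm1 : pk k' ∈ invPairs (sPerm k * w) := by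
            rw [invPairs_smul, if_pos hk_mem, Finset.mem_erase]
            exact ⟨ne3.symm, mem_image_smap.mpr (by rw [m1]; exact hac)⟩
          have hm2 : pk k ∈ invPairs (sPerm k' * (sPerm k * w)) := by
            rw [invPairs_smul, if_pos hm1, Finset.mem_erase]
            refine ⟨ne3, mem_image_smap.mpr ?_⟩
            rw [m2, invPairs_smul, if_pos hk_mem, Finset.mem_erase]
            exact ⟨ne1, mem_image_smap.mpr (by rw [m3]; exact hk'_mem)⟩
          set z := sPerm k * (sPerm k' * (sPerm k * w)) with hz
          have hn1 : nInv (sPerm k * w) + 1 = nInv w := nInv_smul_mem hk_mem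
          have hn1' : nInv (sPerm k' * w) + 1 = nInv w := nInv_smul_mem hk'_mem
          have hn2 := nInv_smul_mem hm1
          have hn3 := nInv_smul_mem hm2
          rw [← hz] at hn3
          have hc1 : Red (cw z) := cw_red z
          have hc2 : wprod (cw z) = z := cw_prod z
          have hcl : (cw z).length = nInv z := cw_length z
          have hbraid : sPerm k * sPerm k' * sPerm k = sPerm k' * sPerm k * sPerm k' :=
            sPerm_braid hadj
          have hq1 : wprod (k' :: k :: cw z) = sPerm k * w := by
            rw [wprod_cons, wprod_cons, hc2, hz]
            have e : sPerm k' * (sPerm k * (sPerm k * (sPerm k' * (sPerm k * w)))) =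
                (sPerm k' * ((sPerm k * sPerm k) * sPerm k')) * (sPerm k * w) := by
              group
            rw [e, sPerm_mul_self, one_mul, sPerm_mul_self, one_mul]
          have hq2 : wprod (k :: k' :: cw z) = sPerm k' * w := by
            rw [wprod_cons, wprod_cons, hc2, hz]
            have e : sPerm k * (sPerm k' * (sPerm k * (sPerm k' * (sPerm k * w)))) =
                ((sPerm k * sPerm k' * sPerm k) * sPerm k') * (sPerm k * w) := by
              group
            rw [e, hbraid]
            have e2 : ((sPerm k' * sPerm k * sPerm k') * sPerm k') * (sPerm k * w) =
                sPerm k' * ((sPerm k * (sPerm k' * sPerm k')) * (sPerm k * w)) := by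
              group
            rw [e2, sPerm_mul_self, mul_one]
            have e3 : sPerm k' * ((sPerm k) * (sPerm k * w)) =
                sPerm k' * ((sPerm k * sPerm k) * w) := by group
            rw [e3, sPerm_mul_self, one_mul]
          have lu : u₁.length = nInv (sPerm k * w) := by
            rw [Red, ← hskw] at hru₁; exact hru₁
          have lu' : u₁'.length = nInv (sPerm k' * w) := by
            rw [Red, ← hsk'w] at hru₁'; exact hru₁'
          have hr1 : Red (k' :: k :: cw z) := by
            rw [Red, List.length_cons, List.length_cons, hq1]
            omega
          have hr2 : Red (k :: k' :: cw z) := by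
            rw [Red, List.length_cons, List.length_cons, hq2]
            omega
          have e1 : tprod K u₁ = tprod K (k' :: k :: cw z) :=
            ih u₁ _ hlen1 hru₁ hr1 (by rw [hq1, hskw])
          have e2 : tprod K u₁' = tprod K (k :: k' :: cw z) :=
            ih u₁' _ (by omega) hru₁' hr2 (by rw [hq2, hsk'w])
          rw [tprod_cons, tprod_cons, e1, e2]
          simp only [tprod_cons, ← mul_assoc]
          rw [T_braid hadj]
        rcases hcases with heq | hadj | hadj' | hfar
        · -- k = k'
          have hkk : k = k' := Fin.ext heq
          subst hkk
          have hpp : wprod u₁ = wprod u₁' := by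
            rw [← hskw, ← hsk'w]
          rw [tprod_cons, tprod_cons, ih u₁ u₁' hlen1 hru₁ hru₁' hpp]
        · exact KEY k k' u₁ u₁' hadj hlen1 hu hu' hp
        · exact (KEY k' k u₁' u₁ hadj' hlen1' hu' hu hp.symm).symm
        · -- far case
          have hcomm : sPerm k * sPerm k' = sPerm k' * sPerm k := sPerm_comm hfar
          have hfix : Sym2.map (sPerm k) (pk k') = pk k' := by
            obtain ⟨e1, e2⟩ := sPerm_fix_far hfar
            rw [pk, Sym2.map_pair_eq, e1, e2]
          have hfar' : k'.1 + 1 < k.1 ∨ k.1 + 1 < k'.1 := hfar.symm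
          have hfix' : Sym2.map (sPerm k') (pk k) = pk k := by
            obtain ⟨e1, e2⟩ := sPerm_fix_far hfar'
            rw [pk, Sym2.map_pair_eq, e1, e2]
          have hne_pk : pk k' ≠ pk k := by
            simp only [pk, ne_eq, Sym2.eq_iff, Fin.ext_iff, pc_val, ps_val]; omega
          have hmem1 : pk k' ∈ invPairs (sPerm k * w) := by
            rw [invPairs_smul, if_pos hk_mem, Finset.mem_erase]
            exact ⟨hne_pk, mem_image_smap.mpr (by rw [hfix]; exact hk'_mem)⟩
          have hmem2 : pk k ∈ invPairs (sPerm k' * w) := by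
            rw [invPairs_smul, if_pos hk'_mem, Finset.mem_erase]
            exact ⟨hne_pk.symm, mem_image_smap.mpr (by rw [hfix']; exact hk_mem)⟩
          set z := sPerm k' * (sPerm k * w) with hz
          have hzz : sPerm k * (sPerm k' * w) = z := by
            rw [hz, ← mul_assoc, hcomm, mul_assoc]
          have hn2 : nInv z + 1 = nInv (sPerm k * w) := nInv_smul_mem hmem1
          have hn2' : nInv (sPerm k * (sPerm k' * w)) + 1 = nInv (sPerm k' * w) :=
            nInv_smul_mem hmem2
          rw [hzz] at hn2'
          have hc2 : wprod (cw z) = z := cw_prod z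
          have hcl : (cw z).length = nInv z := cw_length z
          have hq1 : wprod (k' :: cw z) = sPerm k * w := by
            rw [wprod_cons, hc2, hz, ← mul_assoc, sPerm_mul_self, one_mul]
          have hq2 : wprod (k :: cw z) = sPerm k' * w := by
            rw [wprod_cons, hc2, ← hzz, ← mul_assoc, sPerm_mul_self, one_mul]
          have hr1 : Red (k' :: cw z) := by
            rw [Red, List.length_cons, hq1]; omega
          have hr2 : Red (k :: cw z) := by
            rw [Red, List.length_cons, hq2]; omega
          have e1 : tprod K u₁ = tprod K (k' :: cw z) :=
            ih u₁ _ hlen1 hru₁ hr1 (by rw [hq1, hskw])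
          have e2 : tprod K u₁' = tprod K (k :: cw z) :=
            ih u₁' _ hlen1' hru₁' hr2 (by rw [hq2, hsk'w])
          rw [tprod_cons, tprod_cons, e1, e2]
          simp only [tprod_cons, ← mul_assoc]
          rw [T_far hfar]

lemma tprod_eq_of_red {u u' : List (Fin (n-1))} (hu : Red u) (hu' : Red u')
    (hp : wprod u = wprod u') : tprod K u = tprod K u' :=
  mats u.length u u' le_rfl hu hu' hp

lemma tprod_not_red : ∀ (u : List (Fin (n-1))), ¬ Red u → tprod K u = (0 : Rn K n) := by
  intro u
  induction u with
  | nil => intro h; exact absurd red_nil h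
  | cons k u₁ ih =>
    intro h
    by_cases hr : Red u₁
    · have hmem : pk k ∈ invPairs (wprod u₁) := by
        by_contra hc
        exact h (red_cons_iff.mpr ⟨hr, hc⟩)
      have hpairs : pk k ∈ pairs u₁ := by
        rw [← nodup_toFinset u₁ (red_nodup hr)] at hmem
        exact List.mem_toFinset.mp hmem
      obtain ⟨u₂, hl2, hp2⟩ := exc u₁ _ hpairs
      rw [pairPerm_pk] at hp2
      have hprodeq : wprod u₁ = wprod (k :: u₂) := by rw [wprod_cons, hp2]
      have hred2 : Red (k :: u₂) := by
        rw [Red, List.length_cons, ← hprodeq]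
        rw [Red] at hr
        omega
      have heq : tprod K u₁ = tprod K (k :: u₂) := tprod_eq_of_red hr hred2 hprodeq
      rw [tprod_cons, heq, tprod_cons, ← mul_assoc, T_mul_self, zero_mul]
    · rw [tprod_cons, ih hr, mul_zero]

end QH1
namespace QH1

open Finset

variable {n : ℕ} {K : Type} [Field K]

/-- The auxiliary module: functions on finsets of pairs. -/
abbrev MM (K : Type) (n : ℕ) := Finset (Sym2 (Fin n)) → K

/-- The operator by which `τ_k` acts on `MM`. -/
noncomputable def topT (K : Type) [Field K] {n : ℕ} (k : Fin (n-1)) :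
    MM K n →ₗ[K] MM K n where
  toFun f := fun T =>
    if pk k ∈ T then f ((T.erase (pk k)).image (Sym2.map (sPerm k))) else 0
  map_add' f g := by
    funext T
    by_cases h : pk k ∈ T <;> simp [h]
  map_smul' c f := by
    funext T
    by_cases h : pk k ∈ T <;> simp [h]

lemma topT_apply (k : Fin (n-1)) (f : MM K n) (T : Finset (Sym2 (Fin n))) :
    topT K k f T =
      if pk k ∈ T then f ((T.erase (pk k)).image (Sym2.map (sPerm k))) else 0 := rfl

lemma erase_image_smap (k : Fin (n-1)) (q : Sym2 (Fin n)) (S : Finset (Sym2 (Fin n))) :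
    (S.image (Sym2.map (sPerm k))).erase q =
      (S.erase (Sym2.map (sPerm k) q)).image (Sym2.map (sPerm k)) := by
  ext p
  simp only [Finset.mem_erase, mem_image_smap]
  constructor
  · rintro ⟨h1, h2⟩
    exact ⟨fun hc => h1 (smap_inj k hc), h2⟩
  · rintro ⟨h1, h2⟩
    exact ⟨fun hc => h1 (by rw [hc]), h2⟩

lemma erase_image_perm (g : Equiv.Perm (Fin n)) (q : Sym2 (Fin n))
    (S : Finset (Sym2 (Fin n))) :
    (S.image (Sym2.map ⇑g)).erase q =
      (S.erase (Sym2.map (⇑g⁻¹) q)).image (Sym2.map ⇑g) := by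
  ext p
  simp only [Finset.mem_erase, mem_image_perm]
  constructor
  · rintro ⟨h1, h2⟩
    exact ⟨fun hc => h1 (smap_perm_inj g⁻¹ hc), h2⟩
  · rintro ⟨h1, h2⟩
    exact ⟨fun hc => h1 (by rw [hc]), h2⟩

lemma image_image_perm (g h : Equiv.Perm (Fin n)) (S : Finset (Sym2 (Fin n))) :
    (S.image (Sym2.map ⇑g)).image (Sym2.map ⇑h) = S.image (Sym2.map ⇑(h * g)) := by
  rw [Finset.image_image]
  congr 1
  funext p
  show Sym2.map ⇑h (Sym2.map ⇑g p) = Sym2.map (⇑(h * g)) p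
  rw [Sym2.map_map, Equiv.Perm.coe_mul]

lemma image_smap_invol (k : Fin (n-1)) (S : Finset (Sym2 (Fin n))) :
    (S.image (Sym2.map (sPerm k))).image (Sym2.map (sPerm k)) = S := by
  rw [image_image_perm, sPerm_mul_self]
  have h1 : Sym2.map (⇑(1 : Equiv.Perm (Fin n))) = id := by
    funext p
    induction p using Sym2.ind with
    | _ a b => simp [Sym2.map_pair_eq]
  rw [h1, Finset.image_id]

lemma rel_tsq (k : Fin (n-1)) :
    (topT K (n := n) k) * topT K k = 0 := by
  apply LinearMap.ext
  intro f
  funext T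
  show topT K k (topT K k f) T = 0
  rw [topT_apply]
  split_ifs with h1
  · rw [topT_apply, if_neg]
    rw [mem_image_smap, smap_pk, Finset.mem_erase]
    simp
  · rfl

lemma rel_far {k k' : Fin (n-1)} (h : k.1 + 1 < k'.1 ∨ k'.1 + 1 < k.1) :
    (topT K (n := n) k) * topT K k' = topT K k' * topT K k := by
  have hfix : Sym2.map (sPerm k) (pk k') = pk k' := by
    obtain ⟨e1, e2⟩ := sPerm_fix_far h
    rw [pk, Sym2.map_pair_eq, e1, e2]
  have hfix' : Sym2.map (sPerm k') (pk k) = pk k := by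
    obtain ⟨e1, e2⟩ := sPerm_fix_far h.symm
    rw [pk, Sym2.map_pair_eq, e1, e2]
  have hne : pk k' ≠ pk k := by
    simp only [pk, ne_eq, Sym2.eq_iff, Fin.ext_iff, pc_val, ps_val]; omega
  apply LinearMap.ext
  intro f
  funext T
  show topT K k (topT K k' f) T = topT K k' (topT K k f) T
  simp only [topT_apply]
  by_cases h1 : pk k ∈ T <;> by_cases h2 : pk k' ∈ T
  · have c1 : pk k' ∈ (T.erase (pk k)).image (Sym2.map (sPerm k)) := by
      rw [mem_image_smap, hfix, Finset.mem_erase]; exact ⟨hne, h2⟩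
    have c1' : pk k ∈ (T.erase (pk k')).image (Sym2.map (sPerm k')) := by
      rw [mem_image_smap, hfix', Finset.mem_erase]
      exact ⟨fun hc => hne hc.symm, h1⟩
    rw [if_pos h1, if_pos h2, if_pos c1, if_pos c1']
    rw [erase_image_smap k, hfix, erase_image_smap k', hfix', image_image_perm,
      image_image_perm, Finset.erase_right_comm, sPerm_comm h]
  · have c2 : pk k' ∉ (T.erase (pk k)).image (Sym2.map (sPerm k)) := by
      rw [mem_image_smap, hfix, Finset.mem_erase]
      rintro ⟨-, hc⟩; exact h2 hc
    rw [if_pos h1, if_neg h2, if_neg c2]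
  · have c2' : pk k ∉ (T.erase (pk k')).image (Sym2.map (sPerm k')) := by
      rw [mem_image_smap, hfix', Finset.mem_erase]
      rintro ⟨-, hc⟩; exact h1 hc
    rw [if_neg h1, if_pos h2, if_neg c2']
  · rw [if_neg h1, if_neg h2]

section Braid

variable {k k' : Fin (n-1)}

lemma adj_m1 (hadj : k'.1 = k.1 + 1) :
    Sym2.map (sPerm k) (pk k') = s(pc k, ps k') := by
  have hbc : ps k = pc k' := by apply Fin.ext; simp [hadj]
  have ekc : sPerm k (pc k') = pc k := by rw [← hbc]; exact Equiv.swap_apply_right _ _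
  have ekc' : sPerm k (ps k') = ps k' :=
    Equiv.swap_apply_of_ne_of_ne
      (by simp only [ne_eq, Fin.ext_iff, pc_val, ps_val]; omega)
      (by simp only [ne_eq, Fin.ext_iff, pc_val, ps_val]; omega)
  rw [pk, Sym2.map_pair_eq, ekc, ekc']

lemma adj_m2 (hadj : k'.1 = k.1 + 1) :
    Sym2.map (sPerm k') (pk k) = s(pc k, ps k') := by
  have hbc : ps k = pc k' := by apply Fin.ext; simp [hadj]
  have ek'a : sPerm k' (pc k) = pc k :=
    Equiv.swap_apply_of_ne_of_ne
      (by simp only [ne_eq, Fin.ext_iff, pc_val, ps_val]; omega)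
      (by simp only [ne_eq, Fin.ext_iff, pc_val, ps_val]; omega)
  have ek'b : sPerm k' (ps k) = ps k' := by rw [hbc]; exact Equiv.swap_apply_left _ _
  rw [pk, Sym2.map_pair_eq, ek'a, ek'b]

lemma adj_m3 (hadj : k'.1 = k.1 + 1) :
    Sym2.map (sPerm k) s(pc k, ps k') = pk k' := by
  have hbc : ps k = pc k' := by apply Fin.ext; simp [hadj]
  have eka : sPerm k (pc k) = ps k := Equiv.swap_apply_left _ _
  have ekc' : sPerm k (ps k') = ps k' :=
    Equiv.swap_apply_of_ne_of_ne
      (by simp only [ne_eq, Fin.ext_iff, pc_val, ps_val]; omega)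
      (by simp only [ne_eq, Fin.ext_iff, pc_val, ps_val]; omega)
  rw [Sym2.map_pair_eq, eka, ekc', hbc, pk]

lemma adj_m4 (hadj : k'.1 = k.1 + 1) :
    Sym2.map (sPerm k') s(pc k, ps k') = pk k := by
  have hbc : ps k = pc k' := by apply Fin.ext; simp [hadj]
  have ek'a : sPerm k' (pc k) = pc k :=
    Equiv.swap_apply_of_ne_of_ne
      (by simp only [ne_eq, Fin.ext_iff, pc_val, ps_val]; omega)
      (by simp only [ne_eq, Fin.ext_iff, pc_val, ps_val]; omega)
  have ek'c : sPerm k' (ps k') = pc k' := Equiv.swap_apply_right _ _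
  rw [Sym2.map_pair_eq, ek'a, ek'c, ← hbc, pk]

lemma adj_ne1 (hadj : k'.1 = k.1 + 1) : pk k ≠ pk k' := by
  simp only [pk, ne_eq, Sym2.eq_iff, Fin.ext_iff, pc_val, ps_val]; omega

lemma adj_ne2 (hadj : k'.1 = k.1 + 1) : s(pc k, ps k') ≠ pk k := by
  simp only [pk, ne_eq, Sym2.eq_iff, Fin.ext_iff, pc_val, ps_val]; omega

lemma adj_ne3 (hadj : k'.1 = k.1 + 1) : s(pc k, ps k') ≠ pk k' := by
  simp only [pk, ne_eq, Sym2.eq_iff, Fin.ext_iff, pc_val, ps_val]; omega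

lemma braid_lhs (hadj : k'.1 = k.1 + 1) (f : MM K n) (T : Finset (Sym2 (Fin n))) :
    topT K k (topT K k' (topT K k f)) T =
      if pk k ∈ T ∧ s(pc k, ps k') ∈ T ∧ pk k' ∈ T then
        f ((((T.erase (pk k)).erase s(pc k, ps k')).erase (pk k')).image
            (Sym2.map ⇑(sPerm k * (sPerm k' * sPerm k)))) else 0 := by
  have m1 := adj_m1 hadj
  have m2 := adj_m2 hadj
  have m3 := adj_m3 hadj
  have ne1 := adj_ne1 hadj
  have ne2 := adj_ne2 hadj
  have ne3 := adj_ne3 hadj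
  simp only [topT_apply]
  by_cases h1 : pk k ∈ T
  · rw [if_pos h1]
    by_cases h2 : s(pc k, ps k') ∈ T
    · have c2 : pk k' ∈ (T.erase (pk k)).image (Sym2.map (sPerm k)) := by
        rw [mem_image_smap, m1, Finset.mem_erase]
        exact ⟨ne2, h2⟩
      rw [if_pos c2]
      by_cases h3 : pk k' ∈ T
      · have c3 : pk k ∈ (((T.erase (pk k)).image (Sym2.map (sPerm k))).erase
            (pk k')).image (Sym2.map (sPerm k')) := by
          rw [mem_image_smap, m2, Finset.mem_erase, mem_image_smap, m3, Finset.mem_erase]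
          exact ⟨ne3, fun hc => ne1 hc.symm, h3⟩
        rw [if_pos c3, if_pos ⟨h1, h2, h3⟩]
        congr 1
        have e5 : Sym2.map ⇑(sPerm k' * sPerm k)⁻¹ (pk k) = pk k' := by
          rw [mul_inv_rev, sPerm_inv, sPerm_inv, Equiv.Perm.coe_mul, ← Sym2.map_map,
            m2, m3]
        rw [erase_image_smap k (pk k') (T.erase (pk k)), m1, image_image_perm,
          erase_image_perm (sPerm k' * sPerm k) (pk k), e5, image_image_perm]
      · have c3 : pk k ∉ (((T.erase (pk k)).image (Sym2.map (sPerm k))).erase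
            (pk k')).image (Sym2.map (sPerm k')) := by
          rw [mem_image_smap, m2, Finset.mem_erase, mem_image_smap, m3, Finset.mem_erase]
          rintro ⟨-, -, hc⟩
          exact h3 hc
        rw [if_neg c3, if_neg (by tauto)]
    · have c2 : pk k' ∉ (T.erase (pk k)).image (Sym2.map (sPerm k)) := by
        rw [mem_image_smap, m1, Finset.mem_erase]
        rintro ⟨-, hc⟩
        exact h2 hc
      rw [if_neg c2, if_neg (by tauto)]
  · rw [if_neg h1, if_neg (by tauto)]

lemma braid_rhs (hadj : k'.1 = k.1 + 1) (f : MM K n) (T : Finset (Sym2 (Fin n))) :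
    topT K k' (topT K k (topT K k' f)) T =
      if pk k' ∈ T ∧ s(pc k, ps k') ∈ T ∧ pk k ∈ T then
        f ((((T.erase (pk k')).erase s(pc k, ps k')).erase (pk k)).image
            (Sym2.map ⇑(sPerm k' * (sPerm k * sPerm k')))) else 0 := by
  have m1 := adj_m1 hadj
  have m2 := adj_m2 hadj
  have m4 := adj_m4 hadj
  have ne1 := adj_ne1 hadj
  have ne2 := adj_ne2 hadj
  have ne3 := adj_ne3 hadj
  simp only [topT_apply]
  by_cases h1 : pk k' ∈ T
  · rw [if_pos h1]
    by_cases h2 : s(pc k, ps k') ∈ T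
    · have c2 : pk k ∈ (T.erase (pk k')).image (Sym2.map (sPerm k')) := by
        rw [mem_image_smap, m2, Finset.mem_erase]
        exact ⟨ne3, h2⟩
      rw [if_pos c2]
      by_cases h3 : pk k ∈ T
      · have c3 : pk k' ∈ (((T.erase (pk k')).image (Sym2.map (sPerm k'))).erase
            (pk k)).image (Sym2.map (sPerm k)) := by
          rw [mem_image_smap, m1, Finset.mem_erase, mem_image_smap, m4, Finset.mem_erase]
          exact ⟨ne2, ne1, h3⟩
        rw [if_pos c3, if_pos ⟨h1, h2, h3⟩]
        congr 1
        have e5 : Sym2.map ⇑(sPerm k * sPerm k')⁻¹ (pk k') = pk k := by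
          rw [mul_inv_rev, sPerm_inv, sPerm_inv, Equiv.Perm.coe_mul, ← Sym2.map_map,
            m1, m4]
        rw [erase_image_smap k' (pk k) (T.erase (pk k')), m2, image_image_perm,
          erase_image_perm (sPerm k * sPerm k') (pk k'), e5, image_image_perm]
      · have c3 : pk k' ∉ (((T.erase (pk k')).image (Sym2.map (sPerm k'))).erase
            (pk k)).image (Sym2.map (sPerm k)) := by
          rw [mem_image_smap, m1, Finset.mem_erase, mem_image_smap, m4, Finset.mem_erase]
          rintro ⟨-, -, hc⟩
          exact h3 hc
        rw [if_neg c3, if_neg (by tauto)]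
    · have c2 : pk k ∉ (T.erase (pk k')).image (Sym2.map (sPerm k')) := by
        rw [mem_image_smap, m2, Finset.mem_erase]
        rintro ⟨-, hc⟩
        exact h2 hc
      rw [if_neg c2, if_neg (by tauto)]
  · rw [if_neg h1, if_neg (by tauto)]

lemma rel_braid (hadj : k'.1 = k.1 + 1) :
    topT K (n := n) k * topT K k' * topT K k = topT K k' * topT K k * topT K k' := by
  apply LinearMap.ext
  intro f
  funext T
  show topT K k (topT K k' (topT K k f)) T = topT K k' (topT K k (topT K k' f)) T
  rw [braid_lhs hadj, braid_rhs hadj]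
  have hperm : sPerm k * (sPerm k' * sPerm k) = sPerm k' * (sPerm k * sPerm k') := by
    have hb := sPerm_braid hadj
    rw [mul_assoc, mul_assoc] at hb
    exact hb
  have hsets : (((T.erase (pk k)).erase s(pc k, ps k')).erase (pk k')) =
      (((T.erase (pk k')).erase s(pc k, ps k')).erase (pk k)) := by
    rw [Finset.erase_right_comm (a := s(pc k, ps k')) (b := pk k'),
      Finset.erase_right_comm (a := pk k) (b := pk k')]
    exact Finset.erase_right_comm
  by_cases h : pk k ∈ T ∧ s(pc k, ps k') ∈ T ∧ pk k' ∈ T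
  · rw [if_pos h, if_pos (by tauto), hperm, hsets]
  · rw [if_neg h, if_neg (by tauto)]

end Braid

/-- The representation of the free algebra. -/
noncomputable def phi0 : F K n →ₐ[K] Module.End K (MM K n) :=
  FreeAlgebra.lift K (fun g => match g with
    | Gen.x _ => (0 : Module.End K (MM K n))
    | Gen.t k => topT K k)

@[simp] lemma phi0_gx (t : Fin n) : phi0 (K := K) (gx K t) = 0 := by
  rw [phi0, gx, FreeAlgebra.lift_ι_apply]

@[simp] lemma phi0_gt (k : Fin (n-1)) : phi0 (K := K) (gt K k) = topT K k := by
  rw [phi0, gt, FreeAlgebra.lift_ι_apply]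

lemma phi0_rel : ∀ ⦃x y : F K n⦄, Rel K n x y → phi0 (K := K) x = phi0 y := by
  intro x y h
  cases h with
  | xx k t => simp [map_mul]
  | tsq k =>
    rw [map_mul, map_zero, phi0_gt]
    exact rel_tsq k
  | braid k k' h =>
    simp only [map_mul, phi0_gt]
    exact rel_braid h
  | ttfar k t h =>
    simp only [map_mul, phi0_gt]
    exact rel_far h
  | xt k => simp [map_mul]
  | tx k => simp [map_mul]
  | txfar k t h1 h2 => simp [map_mul]

/-- The representation of `Rn` on `MM`. -/
noncomputable def phi : Rn K n →ₐ[K] Module.End K (MM K n) :=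
  RingQuot.liftAlgHom K ⟨phi0, phi0_rel⟩

lemma phi_X (t : Fin n) : phi (K := K) (n := n) (X K t) = 0 := by
  rw [X, phi, RingQuot.liftAlgHom_mkAlgHom_apply, phi0_gx]

lemma phi_T (k : Fin (n-1)) : phi (K := K) (n := n) (T K k) = topT K k := by
  rw [T, phi, RingQuot.liftAlgHom_mkAlgHom_apply, phi0_gt]

/-- delta function -/
noncomputable def delta (S : Finset (Sym2 (Fin n))) : MM K n :=
  fun T => if T = S then 1 else 0

lemma delta_ne_zero (S : Finset (Sym2 (Fin n))) : delta (K := K) S ≠ 0 := by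
  intro h
  have h2 := congrFun h S
  simp [delta] at h2

lemma topT_delta (k : Fin (n-1)) (S : Finset (Sym2 (Fin n))) :
    topT K k (delta S) =
      if pk k ∈ S then 0
      else delta (K := K) (insert (pk k) (S.image (Sym2.map (sPerm k)))) := by
  funext T
  rw [topT_apply]
  have hrhs : (if pk k ∈ S then (0 : MM K n)
      else delta (K := K) (insert (pk k) (S.image (Sym2.map (sPerm k))))) T =
      if pk k ∈ S then (0 : K)
      else delta (K := K) (insert (pk k) (S.image (Sym2.map (sPerm k)))) T := by
    split_ifs <;> rfl
  rw [hrhs]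
  by_cases h2 : pk k ∈ S
  · rw [if_pos h2]
    by_cases h1 : pk k ∈ T
    · rw [if_pos h1, delta, if_neg]
      intro hc
      have hmem : pk k ∈ (T.erase (pk k)).image (Sym2.map (sPerm k)) := by
        rw [hc]; exact h2
      rw [mem_image_smap, smap_pk, Finset.mem_erase] at hmem
      exact hmem.1 rfl
    · rw [if_neg h1]
  · rw [if_neg h2]
    by_cases h1 : pk k ∈ T
    · rw [if_pos h1, delta, delta]
      have hiff : ((T.erase (pk k)).image (Sym2.map (sPerm k)) = S) ↔
          (T = insert (pk k) (S.image (Sym2.map (sPerm k)))) := by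
        constructor
        · intro hc
          rw [← hc, image_smap_invol, Finset.insert_erase h1]
        · intro hc
          rw [hc, Finset.erase_insert (by rw [mem_image_smap, smap_pk]; exact h2),
            image_smap_invol]
      rw [if_congr hiff rfl rfl]
    · rw [if_neg h1, delta, if_neg]
      intro hc
      rw [hc] at h1
      exact h1 (Finset.mem_insert_self _ _)

lemma prod_topT_delta : ∀ u : List (Fin (n-1)),
    ((u.map (topT K (n := n))).prod) (delta ∅) =
      if (pairs u).Nodup then delta ((pairs u).toFinset) else 0 := by
  intro u
  induction u with
  | nil => simp [pairs]
  | cons k u ih =>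
    rw [List.map_cons, List.prod_cons]
    have happ : ((topT K k * (u.map (topT K (n := n))).prod)) (delta ∅) =
        topT K k (((u.map (topT K (n := n))).prod) (delta ∅)) := rfl
    rw [happ, ih]
    have hmm : pk k ∈ (pairs u).map (Sym2.map (sPerm k)) ↔ pk k ∈ pairs u := by
      constructor
      · intro hx
        obtain ⟨q, hq, hq2⟩ := List.mem_map.mp hx
        have hqe : q = pk k := by
          have h3 := congrArg (Sym2.map (sPerm k)) hq2
          rwa [smap_smap, smap_pk] at h3
        rwa [hqe] at hq
      · intro hx
        exact List.mem_map.mpr ⟨pk k, hx, smap_pk k⟩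
    have himg : ((pairs u).toFinset.image (Sym2.map (sPerm k))) =
        ((pairs u).map (Sym2.map (sPerm k))).toFinset := by
      ext p
      simp [List.mem_toFinset, List.mem_map, Finset.mem_image]
    by_cases hnd : (pairs u).Nodup
    · rw [if_pos hnd, topT_delta]
      by_cases hmem : pk k ∈ (pairs u).toFinset
      · rw [if_pos hmem, if_neg]
        rw [pairs, List.nodup_cons]
        rintro ⟨hc, -⟩
        exact hc (hmm.mpr (List.mem_toFinset.mp hmem))
      · rw [if_neg hmem, if_pos]
        · congr 1
          rw [pairs, List.toFinset_cons, himg]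
        · rw [pairs, List.nodup_cons]
          exact ⟨fun hc => hmem (List.mem_toFinset.mpr (hmm.mp hc)), hnd.map (smap_inj k)⟩
    · rw [if_neg hnd, map_zero, if_neg]
      intro hc
      rw [pairs, List.nodup_cons] at hc
      exact hnd (hc.2.of_map _)

lemma phi_tprod (u : List (Fin (n-1))) :
    phi (K := K) (tprod K u) = ((u.map (topT K (n := n))).prod) := by
  rw [tprod, map_list_prod]
  congr 1
  rw [List.map_map]
  congr 1
  funext j
  exact phi_T j

lemma eval_XIdeal {r : Rn K n} (hr : r ∈ XIdeal K n) :
    phi (K := K) r (delta ∅) = 0 := by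
  refine Submodule.span_induction ?_ ?_ ?_ ?_ hr
  · rintro x ⟨t, rfl⟩
    rw [phi_X]
    rfl
  · rw [map_zero]
    rfl
  · intro x y _ _ hx hy
    rw [map_add]
    show phi (K := K) x (delta ∅) + phi (K := K) y (delta ∅) = 0
    rw [hx, hy, add_zero]
  · intro r x _ hx
    show phi (K := K) (r * x) (delta ∅) = 0
    rw [map_mul]
    show phi (K := K) r (phi (K := K) x (delta ∅)) = 0
    rw [hx, map_zero]

lemma tprod_notmem_XIdeal {u : List (Fin (n-1))} (hu : Red u) :
    tprod K u ∉ XIdeal K n := by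
  intro hc
  have h0 : phi (K := K) (tprod K u) (delta ∅) = 0 := eval_XIdeal hc
  rw [phi_tprod, prod_topT_delta, if_pos (red_nodup hu)] at h0
  exact delta_ne_zero _ h0

end QH1
namespace QH1

variable {n : ℕ} {K : Type} [Field K]

lemma wprod_append (u v : List (Fin (n-1))) : wprod (u ++ v) = wprod u * wprod v := by
  simp [wprod]

lemma mk_mul_X_eq_zero (a : Rn K n) (t : Fin n) :
    (Submodule.Quotient.mk (a * X K t) : Lbar K n) = 0 := by
  rw [Submodule.Quotient.mk_eq_zero]
  have h : a * X K t = a • X K t := rfl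
  rw [h]
  exact Submodule.smul_mem _ a (Submodule.subset_span ⟨t, rfl⟩)

/-- The standard vectors in `Lbar`. -/
noncomputable def Vw (K : Type) [Field K] {n : ℕ} (w : Equiv.Perm (Fin n)) : Lbar K n :=
  Submodule.Quotient.mk (tprod K (cw w))

lemma X_smul_Vw (t : Fin n) (w : Equiv.Perm (Fin n)) :
    X K t • (Vw K w : Lbar K n) = 0 := by
  rw [Vw, ← Submodule.Quotient.mk_smul]
  have h : X K t • tprod K (cw w) = tprod K (cw w) * X K ((wprod (cw w))⁻¹ t) := by
    rw [smul_eq_mul, X_tprod]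
  rw [h, mk_mul_X_eq_zero]

lemma T_smul_Vw (k : Fin (n-1)) (w : Equiv.Perm (Fin n)) :
    T K k • (Vw K w : Lbar K n) = 0 ∨ T K k • (Vw K w : Lbar K n) = Vw K (sPerm k * w) := by
  have h : T K k • (Vw K w : Lbar K n) =
      Submodule.Quotient.mk (tprod K (k :: cw w)) := by
    rw [Vw, ← Submodule.Quotient.mk_smul, smul_eq_mul, ← tprod_cons]
  by_cases hr : Red (k :: cw w)
  · right
    rw [h, Vw]
    congr 1
    exact tprod_eq_of_red hr (cw_red _) (by rw [wprod_cons, cw_prod, cw_prod])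
  · left
    rw [h, tprod_not_red _ hr]
    simp

lemma mem_span_Vw (y : Lbar K n) :
    y ∈ Submodule.span K (Set.range (Vw K (n := n))) := by
  obtain ⟨r, rfl⟩ := Submodule.Quotient.mk_surjective _ y
  obtain ⟨f, rfl⟩ := RingQuot.mkAlgHom_surjective K (Rel K n) r
  have main : ∀ f : F K n, ∀ y ∈ Submodule.span K (Set.range (Vw K (n := n))),
      (RingQuot.mkAlgHom K (Rel K n) f) • y ∈ Submodule.span K (Set.range (Vw K (n := n))) := by
    intro f
    induction f using FreeAlgebra.induction with
    | grade0 c =>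
      intro y hy
      rw [AlgHom.commutes, algebraMap_smul]
      exact Submodule.smul_mem _ c hy
    | grade1 g =>
      cases g with
      | x t =>
        intro y hy
        refine Submodule.span_induction ?_ ?_ ?_ ?_ hy
        · rintro z ⟨w, rfl⟩
          have hX : RingQuot.mkAlgHom K (Rel K n) (FreeAlgebra.ι K (Gen.x t)) = X K t := rfl
          rw [hX, X_smul_Vw]
          exact Submodule.zero_mem _
        · rw [smul_zero]; exact Submodule.zero_mem _
        · intro a b _ _ ha hb
          rw [smul_add]; exact Submodule.add_mem _ ha hb
        · intro c a _ ha
          rw [smul_comm]; exact Submodule.smul_mem _ c ha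
      | t k =>
        intro y hy
        refine Submodule.span_induction ?_ ?_ ?_ ?_ hy
        · rintro z ⟨w, rfl⟩
          have hT : RingQuot.mkAlgHom K (Rel K n) (FreeAlgebra.ι K (Gen.t k)) = T K k := rfl
          rw [hT]
          rcases T_smul_Vw (K := K) k w with h | h
          · rw [h]; exact Submodule.zero_mem _
          · rw [h]; exact Submodule.subset_span ⟨_, rfl⟩
        · rw [smul_zero]; exact Submodule.zero_mem _
        · intro a b _ _ ha hb
          rw [smul_add]; exact Submodule.add_mem _ ha hb
        · intro c a _ ha
          rw [smul_comm]; exact Submodule.smul_mem _ c ha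
    | mul a b ha hb =>
      intro y hy
      rw [map_mul, mul_smul]
      exact ha _ (hb _ hy)
    | add a b ha hb =>
      intro y hy
      rw [map_add, add_smul]
      exact Submodule.add_mem _ (ha y hy) (hb y hy)
  have hcw1 : cw (1 : Equiv.Perm (Fin n)) = [] :=
    List.eq_nil_of_length_eq_zero (by rw [cw_length, nInv, invPairs_one]; rfl)
  have h1 : (Submodule.Quotient.mk (RingQuot.mkAlgHom K (Rel K n) f) : Lbar K n) =
      (RingQuot.mkAlgHom K (Rel K n) f) • Vw K 1 := by
    rw [Vw, ← Submodule.Quotient.mk_smul]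
    congr 1
    rw [hcw1, tprod_nil, smul_eq_mul, mul_one]
  rw [h1]
  exact main f _ (Submodule.subset_span ⟨1, rfl⟩)

lemma rev_mul_rev : (Fin.revPerm : Equiv.Perm (Fin n)) * Fin.revPerm = 1 := by
  apply Equiv.ext
  intro x
  simp

lemma eq_rev_of_invPairs_full {π : Equiv.Perm (Fin n)} (h : invPairs π = OffD) :
    π = Fin.revPerm := by
  have h1 : invPairs (π * Fin.revPerm) = ∅ := by
    rw [invPairs_mul_rev, h, Finset.sdiff_self]
  have h2 : π * Fin.revPerm = 1 := by
    apply eq_one_of_no_descent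
    intro k
    rw [h1]
    exact Finset.notMem_empty _
  have h3 := congrArg (· * (Fin.revPerm : Equiv.Perm (Fin n))) h2
  simp only [mul_assoc, rev_mul_rev, mul_one, one_mul] at h3
  exact h3

lemma aM (c : K) (z : Lbar K n) : c • z = (algebraMap K (Rn K n) c) • z :=
  (algebraMap_smul _ c z).symm

lemma ksmul_zero (c : K) : c • (0 : Lbar K n) = 0 := by
  rw [aM]; exact smul_zero _

lemma zero_ksmul (z : Lbar K n) : (0 : K) • z = 0 := by
  rw [aM, map_zero]; exact zero_smul _ z

lemma add_ksmul (c c' : K) (z : Lbar K n) : (c + c') • z = c • z + c' • z := by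
  rw [aM, aM, aM, map_add]; exact add_smul _ _ _

lemma ksmul_ksmul (c c' : K) (z : Lbar K n) : c • c' • z = (c * c') • z := by
  rw [aM, aM, aM, ← mul_smul, ← map_mul]

lemma ksmul_comm (r : Rn K n) (c : K) (z : Lbar K n) : r • c • z = c • r • z := by
  rw [aM, aM, ← mul_smul, ← mul_smul, Algebra.commutes]

end QH1

open QH1 in
theorem statement4' (K : Type) [Field K] (n : ℕ)
    (l : List (Fin (n - 1))) (hl : IsRedWord (Fin.revPerm : Equiv.Perm (Fin n)) l) :
    ∀ v₀ : Lbar K n, v₀ = Submodule.Quotient.mk (tprod K l) →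
      v₀ ≠ 0 ∧
      (∀ k : Fin n, X K k • v₀ = 0) ∧
      (∀ k : Fin (n - 1), T K k • v₀ = 0) ∧
      (∀ W : Submodule (Rn K n) (Lbar K n), W ≠ ⊥ → v₀ ∈ W) ∧
      ((Submodule.span (Rn K n) {v₀} : Set (Lbar K n)) =
        Set.range fun c : K => c • v₀) := by
  intro v₀ hv₀
  have hl1 : wprod l = Fin.revPerm := hl.1
  have hred_l : Red l := by
    rw [Red, hl1]
    have h1 := hl.2 (cw Fin.revPerm) (cw_prod _)
    have h2 := nInv_le l
    rw [hl1] at h2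
    rw [cw_length] at h1
    omega
  have hNrev : nInv (Fin.revPerm : Equiv.Perm (Fin n)) = (OffD (n := n)).card := by
    rw [nInv, invPairs_rev]
  have hNle : ∀ w : Equiv.Perm (Fin n), nInv w ≤ (OffD (n := n)).card :=
    fun w => Finset.card_le_card (invPairs_subset_offD w)
  -- part 1
  have part1 : v₀ ≠ 0 := by
    rw [hv₀]
    intro h0
    rw [Submodule.Quotient.mk_eq_zero] at h0
    exact tprod_notmem_XIdeal hred_l h0
  -- part 2
  have part2 : ∀ k : Fin n, X K k • v₀ = 0 := by
    intro t
    rw [hv₀, ← Submodule.Quotient.mk_smul]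
    have h : X K t • tprod K l = tprod K l * X K ((wprod l)⁻¹ t) := by
      rw [smul_eq_mul, X_tprod]
    rw [h, mk_mul_X_eq_zero]
  -- part 3
  have part3 : ∀ k : Fin (n-1), T K k • v₀ = 0 := by
    intro k
    rw [hv₀, ← Submodule.Quotient.mk_smul]
    have hnr : ¬ Red (k :: l) := by
      rw [Red, List.length_cons, wprod_cons, hl1]
      have h2 := hNle (sPerm k * Fin.revPerm)
      have h3 : l.length = nInv (Fin.revPerm : Equiv.Perm (Fin n)) := by
        rw [Red, hl1] at hred_l; exact hred_l
      omega
    have h : T K k • tprod K l = tprod K (k :: l) := by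
      rw [smul_eq_mul, tprod_cons]
    rw [h, tprod_not_red _ hnr]
    simp
  -- part 4
  have part4 : ∀ W : Submodule (Rn K n) (Lbar K n), W ≠ ⊥ → v₀ ∈ W := by
    intro W hW
    obtain ⟨y, hyW, hy0⟩ := Submodule.ne_bot_iff W |>.mp hW
    obtain ⟨c, hc⟩ := Finsupp.mem_span_range_iff_exists_finsupp.mp (mem_span_Vw y)
    have hcne : c ≠ 0 := by
      rintro rfl
      rw [Finsupp.sum_zero_index] at hc
      exact hy0 hc.symm
    obtain ⟨w₀, hw₀, hmin⟩ := Finset.exists_min_image c.support (fun w => nInv w)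
      (Finsupp.support_nonempty_iff.mpr hcne)
    set τ : Rn K n := tprod K (cw (Fin.revPerm * w₀⁻¹)) with hτ
    have hdlen := nInv_rev_mul w₀
    have hterm0 : τ • (Vw K w₀ : Lbar K n) = v₀ := by
      rw [hτ, Vw, ← Submodule.Quotient.mk_smul, hv₀]
      congr 1
      rw [smul_eq_mul, ← tprod_append]
      apply tprod_eq_of_red _ hred_l
      · rw [wprod_append, cw_prod, cw_prod, inv_mul_cancel_right, hl1]
      · rw [Red, List.length_append, cw_length, cw_length, wprod_append, cw_prod,
          cw_prod, inv_mul_cancel_right, hNrev]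
        omega
    have hterm : ∀ w, w ∈ c.support → w ≠ w₀ → τ • (Vw K w : Lbar K n) = 0 := by
      intro w hw hne
      rw [hτ, Vw, ← Submodule.Quotient.mk_smul]
      have hnr : ¬ Red (cw (Fin.revPerm * w₀⁻¹) ++ cw w) := by
        intro hr
        rw [Red, List.length_append, cw_length, cw_length, wprod_append, cw_prod,
          cw_prod] at hr
        have hle := hNle (Fin.revPerm * w₀⁻¹ * w)
        have hge := hmin w hw
        have hfull : nInv (Fin.revPerm * w₀⁻¹ * w) = (OffD (n := n)).card := by omega
        have hinv : invPairs (Fin.revPerm * w₀⁻¹ * w) = OffD := by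
          apply Finset.eq_of_subset_of_card_le (invPairs_subset_offD _)
          rw [← nInv] at *
          omega
        have heq := eq_rev_of_invPairs_full hinv
        have h6 : Fin.revPerm * w₀⁻¹ * w = Fin.revPerm * w₀⁻¹ * w₀ := by
          rw [inv_mul_cancel_right]; exact heq
        exact hne (mul_left_cancel h6)
      rw [smul_eq_mul, ← tprod_append, tprod_not_red _ hnr]
      simp
    have hsum : τ • y = c w₀ • v₀ := by
      rw [← hc, Finsupp.smul_sum]
      have hs : (∑ w ∈ c.support, τ • (c w • (Vw K w : Lbar K n))) =
          τ • ((c w₀) • (Vw K w₀ : Lbar K n)) := by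
        apply Finset.sum_eq_single_of_mem w₀ hw₀
        intro w hw hne
        rw [ksmul_comm, hterm w hw hne]
        exact ksmul_zero _
      rw [show (c.sum fun w a => τ • (a • (Vw K w : Lbar K n))) =
          ∑ w ∈ c.support, τ • (c w • (Vw K w : Lbar K n)) from rfl, hs, ksmul_comm, hterm0]
    have hWτ : τ • y ∈ W := W.smul_mem τ hyW
    rw [hsum] at hWτ
    have hcne0 : c w₀ ≠ 0 := Finsupp.mem_support_iff.mp hw₀
    have hfin : (algebraMap K (Rn K n) ((c w₀)⁻¹)) • (c w₀ • v₀) = v₀ :=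
      (algebraMap_smul (Rn K n) ((c w₀)⁻¹) (c w₀ • v₀)).trans (inv_smul_smul₀ hcne0 v₀)
    have hmem := W.smul_mem (algebraMap K (Rn K n) ((c w₀)⁻¹)) hWτ
    rwa [hfin] at hmem
  refine ⟨part1, part2, part3, part4, ?_⟩
  -- part 5
  have CL5 : ∀ r : Rn K n, ∃ c : K, r • v₀ = c • v₀ := by
    have main : ∀ f : F K n, ∃ c : K,
        (RingQuot.mkAlgHom K (Rel K n) f) • v₀ = c • v₀ := by
      intro f
      induction f using FreeAlgebra.induction with
      | grade0 c =>
        exact ⟨c, by rw [AlgHom.commutes]; exact algebraMap_smul _ c v₀⟩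
      | grade1 g =>
        cases g with
        | x t =>
          refine ⟨0, ?_⟩
          have hX : RingQuot.mkAlgHom K (Rel K n) (FreeAlgebra.ι K (Gen.x t)) = X K t := rfl
          rw [hX, part2]
          exact (zero_ksmul v₀).symm
        | t k =>
          refine ⟨0, ?_⟩
          have hT : RingQuot.mkAlgHom K (Rel K n) (FreeAlgebra.ι K (Gen.t k)) = T K k := rfl
          rw [hT, part3]
          exact (zero_ksmul v₀).symm
      | mul a b ha hb =>
        obtain ⟨ca, ha⟩ := ha
        obtain ⟨cb, hb⟩ := hb
        exact ⟨cb * ca, by rw [map_mul, mul_smul, hb, ksmul_comm, ha, ksmul_ksmul]⟩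
      | add a b ha hb =>
        obtain ⟨ca, ha⟩ := ha
        obtain ⟨cb, hb⟩ := hb
        exact ⟨ca + cb, by rw [map_add, add_smul, ha, hb, ← add_ksmul]⟩
    intro r
    obtain ⟨f, rfl⟩ := RingQuot.mkAlgHom_surjective K (Rel K n) r
    exact main f
  ext x
  constructor
  · intro hx
    obtain ⟨r, hr⟩ := Submodule.mem_span_singleton.mp hx
    obtain ⟨c, hc⟩ := CL5 r
    exact ⟨c, by show c • v₀ = x; rw [← hc, hr]⟩
  · rintro ⟨c, rfl⟩
    show c • v₀ ∈ Submodule.span (Rn K n) {v₀}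
    rw [aM]
    exact Submodule.smul_mem _ _ (Submodule.mem_span_singleton_self v₀)

open QH1 in
/-- `V = K·(τ_{ω₀} ⊗ v)` is an `Rₙ`-submodule of `L̄` on which all
generators act by `0`, and every nonzero `Rₙ`-submodule of `L̄` contains `V`;
hence `V` is the unique irreducible `Rₙ`-submodule of `L̄`. -/
theorem statement4 (K : Type) [Field K] [IsAlgClosed K] (n : ℕ) (hn : 1 ≤ n)
    (r : ℕ) (hr : 0 < r) (a : ℤ) (ha : a ≤ 0) (ha2 : Even a)
    (l : List (Fin (n - 1))) (hl : IsRedWord (Fin.revPerm : Equiv.Perm (Fin n)) l) :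
    -- `v₀` is the class of `τ_{ω₀}`, i.e. the vector `τ_{ω₀} ⊗ v`
    ∀ v₀ : Lbar K n, v₀ = Submodule.Quotient.mk (tprod K l) →
      v₀ ≠ 0 ∧
      (∀ k : Fin n, X K k • v₀ = 0) ∧
      (∀ k : Fin (n - 1), T K k • v₀ = 0) ∧
      (∀ W : Submodule (Rn K n) (Lbar K n), W ≠ ⊥ → v₀ ∈ W) ∧
      ((Submodule.span (Rn K n) {v₀} : Set (Lbar K n)) =
        Set.range fun c : K => c • v₀) := by
  exact statement4' K n l hl
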